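/- arXiv:2011.03690 — 8 statements merged into one kernel-verified Lean document; each statement's English description precedes it below -/
import Mathlib

section
/- Let r1td, r2td, r1no, r2no, L1, L2 be positive reals with λ := r1no/r1td + r2no/r2td - 1 ≥ 0. Then the optimal value of the LP minimizing t1 + t_no + t2 subject to t1·r1td + t_no·r1no = L1, t2·r2td + t_no·r2no = L2, t1, t2, t_no ≥ 0 equals L1/r1td + L2/r2td - λ·min(L1/r1no, L2/r2no), attained at t_no = min(L1/r1no, L2/r2no). -/
/-!
Solving the two rate constraints for `t1` and `t2` turns the objective into the affine function
`L1/r1td + L2/r2td - λ·t_no` of the shared time alone. Nonnegativity of `t1` and `t2` is exactly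
`t_no ≤ min (L1/r1no) (L2/r2no)`, so for `λ ≥ 0` the objective is smallest at that endpoint.
-/

section TimeSharing

variable {t tno rtd rno L : ℝ}

lemma eq_div_of_mul_add_mul_eq (hrtd : rtd ≠ 0) (h : t * rtd + tno * rno = L) :
    t = (L - tno * rno) / rtd := by
  rw [eq_div_iff hrtd]
  linarith

lemma le_div_of_mul_add_mul_eq (ht : 0 ≤ t) (hrtd : 0 ≤ rtd) (hrno : 0 < rno)
    (h : t * rtd + tno * rno = L) : tno ≤ L / rno := by
  rw [le_div_iff₀ hrno]
  nlinarith [mul_nonneg ht hrtd]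

lemma exists_nonneg_mul_add_mul_eq (hrtd : 0 < rtd) (hrno : 0 < rno) (htno : tno ≤ L / rno) :
    ∃ t, 0 ≤ t ∧ t * rtd + tno * rno = L := by
  refine ⟨(L - tno * rno) / rtd, div_nonneg ?_ hrtd.le, by field_simp; ring⟩
  rw [le_div_iff₀ hrno] at htno
  linarith

end TimeSharing

lemma total_time_eq {t1 t2 tno r1td r2td r1no r2no L1 L2 : ℝ} (hr1td : r1td ≠ 0)
    (hr2td : r2td ≠ 0) (h1 : t1 * r1td + tno * r1no = L1) (h2 : t2 * r2td + tno * r2no = L2) :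
    t1 + tno + t2 = L1 / r1td + L2 / r2td - (r1no / r1td + r2no / r2td - 1) * tno := by
  rw [eq_div_of_mul_add_mul_eq hr1td h1, eq_div_of_mul_add_mul_eq hr2td h2]
  field_simp
  ring

/-- optimal LP value when the NOMA priority is nonnegative,
attained at `t_no = min(L1/r1no, L2/r2no)`. -/
theorem stmt_2 (r1td r2td r1no r2no L1 L2 : ℝ)
    (hr1td : 0 < r1td) (hr2td : 0 < r2td) (hr1no : 0 < r1no) (hr2no : 0 < r2no)
    (hL1 : 0 < L1) (hL2 : 0 < L2)
    (hlam : 0 ≤ r1no / r1td + r2no / r2td - 1) :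
    IsLeast {v : ℝ | ∃ t1 t2 tno : ℝ, 0 ≤ t1 ∧ 0 ≤ t2 ∧ 0 ≤ tno ∧
        t1 * r1td + tno * r1no = L1 ∧ t2 * r2td + tno * r2no = L2 ∧
        v = t1 + tno + t2}
      (L1 / r1td + L2 / r2td -
        (r1no / r1td + r2no / r2td - 1) * min (L1 / r1no) (L2 / r2no)) ∧
    (∃ t1 t2 : ℝ, 0 ≤ t1 ∧ 0 ≤ t2 ∧
      t1 * r1td + min (L1 / r1no) (L2 / r2no) * r1no = L1 ∧
      t2 * r2td + min (L1 / r1no) (L2 / r2no) * r2no = L2 ∧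
      t1 + min (L1 / r1no) (L2 / r2no) + t2 =
        L1 / r1td + L2 / r2td -
          (r1no / r1td + r2no / r2td - 1) * min (L1 / r1no) (L2 / r2no)) := by
  set m := min (L1 / r1no) (L2 / r2no)
  have hm : 0 ≤ m := le_min (by positivity) (by positivity)
  obtain ⟨t1, ht1, h1⟩ := exists_nonneg_mul_add_mul_eq hr1td hr1no (min_le_left (L1 / r1no) (L2 / r2no))
  obtain ⟨t2, ht2, h2⟩ := exists_nonneg_mul_add_mul_eq hr2td hr2no (min_le_right (L1 / r1no) (L2 / r2no))
  have hsum := total_time_eq hr1td.ne' hr2td.ne' h1 h2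
  refine ⟨⟨⟨t1, t2, m, ht1, ht2, hm, h1, h2, hsum.symm⟩, ?_⟩, t1, t2, ht1, ht2, h1, h2, hsum⟩
  rintro v ⟨s1, s2, tno, hs1, hs2, -, e1, e2, rfl⟩
  have htno : tno ≤ m := le_min (le_div_of_mul_add_mul_eq hs1 hr1td.le hr1no e1)
    (le_div_of_mul_add_mul_eq hs2 hr2td.le hr2no e2)
  rw [total_time_eq hr1td.ne' hr2td.ne' e1 e2]
  exact sub_le_sub_left (mul_le_mul_of_nonneg_left htno hlam) _
end

section
/- Let r1td, r2td, r1no, r2no, L1, L2 be positive reals with λ := r1no/r1td + r2no/r2td - 1 < 0. Then the optimal value of the LP minimizing t1 + t_no + t2 subject to t1·r1td + t_no·r1no = L1, t2·r2td + t_no·r2no = L2, t1, t2, t_no ≥ 0 equals L1/r1td + L2/r2td, attained uniquely at t_no = 0, tk = Lk/rk_td. -/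
/-!
Eliminating `t₁` and `t₂` through the two data constraints turns the objective into
`L₁/r₁ᵗᵈ + L₂/r₂ᵗᵈ - λ t_no`, where `λ = r₁ⁿᵒ/r₁ᵗᵈ + r₂ⁿᵒ/r₂ᵗᵈ - 1`. With `λ < 0` every unit of
NOMA time strictly increases the sum delay, so the optimum is `t_no = 0`, and then the
constraints fix `tₖ = Lₖ/rₖᵗᵈ`.
-/

/-- The NOMA priority `λ` of the paper. -/
noncomputable def nomaPriority (r1td r2td r1no r2no : ℝ) : ℝ :=
  r1no / r1td + r2no / r2td - 1

lemma sumDelay_eq_tdma_sub_nomaPriority_mul {r1td r2td r1no r2no L1 L2 t1 t2 tno : ℝ}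
    (hr1td : r1td ≠ 0) (hr2td : r2td ≠ 0)
    (hc1 : t1 * r1td + tno * r1no = L1) (hc2 : t2 * r2td + tno * r2no = L2) :
    t1 + tno + t2 = L1 / r1td + L2 / r2td - nomaPriority r1td r2td r1no r2no * tno := by
  subst hc1 hc2
  unfold nomaPriority
  field_simp
  ring

lemma tdma_le_sumDelay {r1td r2td r1no r2no L1 L2 t1 t2 tno : ℝ}
    (hr1td : r1td ≠ 0) (hr2td : r2td ≠ 0) (hlam : nomaPriority r1td r2td r1no r2no ≤ 0)
    (htno : 0 ≤ tno)
    (hc1 : t1 * r1td + tno * r1no = L1) (hc2 : t2 * r2td + tno * r2no = L2) :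
    L1 / r1td + L2 / r2td ≤ t1 + tno + t2 := by
  rw [sumDelay_eq_tdma_sub_nomaPriority_mul hr1td hr2td hc1 hc2]
  nlinarith

lemma tno_eq_zero_of_sumDelay_eq_tdma {r1td r2td r1no r2no L1 L2 t1 t2 tno : ℝ}
    (hr1td : r1td ≠ 0) (hr2td : r2td ≠ 0) (hlam : nomaPriority r1td r2td r1no r2no < 0)
    (hc1 : t1 * r1td + tno * r1no = L1) (hc2 : t2 * r2td + tno * r2no = L2)
    (heq : t1 + tno + t2 = L1 / r1td + L2 / r2td) :
    tno = 0 := by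
  rw [sumDelay_eq_tdma_sub_nomaPriority_mul hr1td hr2td hc1 hc2] at heq
  have : nomaPriority r1td r2td r1no r2no * tno = 0 := by linarith
  exact (mul_eq_zero.mp this).resolve_left hlam.ne

theorem stmt_3_general (r1td r2td r1no r2no L1 L2 : ℝ)
    (hr1td : 0 < r1td) (hr2td : 0 < r2td)
    (hL1 : 0 < L1) (hL2 : 0 < L2)
    (hlam : r1no / r1td + r2no / r2td - 1 < 0) :
    IsLeast {v : ℝ | ∃ t1 t2 tno : ℝ, 0 ≤ t1 ∧ 0 ≤ t2 ∧ 0 ≤ tno ∧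
        t1 * r1td + tno * r1no = L1 ∧ t2 * r2td + tno * r2no = L2 ∧
        v = t1 + tno + t2}
      (L1 / r1td + L2 / r2td) ∧
    (∀ t1 t2 tno : ℝ, 0 ≤ t1 → 0 ≤ t2 → 0 ≤ tno →
      t1 * r1td + tno * r1no = L1 → t2 * r2td + tno * r2no = L2 →
      t1 + tno + t2 = L1 / r1td + L2 / r2td →
      tno = 0 ∧ t1 = L1 / r1td ∧ t2 = L2 / r2td) := by
  have h1 := hr1td.ne'
  have h2 := hr2td.ne'
  change nomaPriority r1td r2td r1no r2no < 0 at hlam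
  refine ⟨⟨⟨L1 / r1td, L2 / r2td, 0, by positivity, by positivity, le_rfl,
      by field_simp; ring, by field_simp; ring, by ring⟩, ?_⟩, ?_⟩
  · rintro v ⟨t1, t2, tno, -, -, htno, hc1, hc2, rfl⟩
    exact tdma_le_sumDelay h1 h2 hlam.le htno hc1 hc2
  · intro t1 t2 tno _ _ _ hc1 hc2 heq
    have htno := tno_eq_zero_of_sumDelay_eq_tdma h1 h2 hlam hc1 hc2 heq
    subst htno
    refine ⟨rfl, ?_, ?_⟩ <;> field_simp <;> linarith

/-- with negative NOMA priority, the LP optimum is the pure-TDMA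
value, attained uniquely at `t_no = 0`, `tk = Lk/rk_td`. -/
theorem stmt_3 (r1td r2td r1no r2no L1 L2 : ℝ)
    (hr1td : 0 < r1td) (hr2td : 0 < r2td) (hr1no : 0 < r1no) (hr2no : 0 < r2no)
    (hL1 : 0 < L1) (hL2 : 0 < L2)
    (hlam : r1no / r1td + r2no / r2td - 1 < 0) :
    IsLeast {v : ℝ | ∃ t1 t2 tno : ℝ, 0 ≤ t1 ∧ 0 ≤ t2 ∧ 0 ≤ tno ∧
        t1 * r1td + tno * r1no = L1 ∧ t2 * r2td + tno * r2no = L2 ∧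
        v = t1 + tno + t2}
      (L1 / r1td + L2 / r2td) ∧
    (∀ t1 t2 tno : ℝ, 0 ≤ t1 → 0 ≤ t2 → 0 ≤ tno →
      t1 * r1td + tno * r1no = L1 → t2 * r2td + tno * r2no = L2 →
      t1 + tno + t2 = L1 / r1td + L2 / r2td →
      tno = 0 ∧ t1 = L1 / r1td ∧ t2 = L2 / r2td) :=
  stmt_3_general r1td r2td r1no r2no L1 L2 hr1td hr2td hL1 hL2 hlam
end

section
/- For positive reals r1td, r2td, r1no, r2no, L1, L2, the optimal value of the LP minimizing t1 + t_no + t2 subject to t1·r1td + t_no·r1no = L1, t2·r2td + t_no·r2no = L2, t1, t2, t_no ≥ 0 equals L1/r1td + L2/r2td - max(λ, 0)·min(L1/r1no, L2/r2no), where λ := r1no/r1td + r2no/r2td - 1. -/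
open Set

lemma isLeast_image_Icc_sub_mul {a c m : ℝ} (hm : 0 ≤ m) :
    IsLeast ((fun x => c - x * a) '' Icc 0 m) (c - max a 0 * m) := by
  refine ⟨?_, ?_⟩
  · rcases le_total 0 a with ha | ha
    · exact ⟨m, ⟨hm, le_rfl⟩, by rw [max_eq_left ha, mul_comm]⟩
    · exact ⟨0, ⟨le_rfl, hm⟩, by rw [max_eq_right ha]; ring⟩
  · rintro _ ⟨x, ⟨hx0, hxm⟩, rfl⟩
    have : x * a ≤ max a 0 * m := calc
      x * a ≤ x * max a 0 := mul_le_mul_of_nonneg_left (le_max_left a 0) hx0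
      _ ≤ m * max a 0 := mul_le_mul_of_nonneg_right hxm (le_max_right a 0)
      _ = max a 0 * m := mul_comm _ _
    exact sub_le_sub_left this c

lemma eq_div_of_mul_add_mul_eq_s4 {t x r s L : ℝ} (hr : 0 < r) (h : t * r + x * s = L) :
    t = (L - x * s) / r := by
  rw [eq_div_iff hr.ne']
  linarith

lemma le_div_of_mul_add_mul_eq_s4 {t x r s L : ℝ} (hr : 0 < r) (hs : 0 < s) (ht : 0 ≤ t)
    (h : t * r + x * s = L) : x ≤ L / s := by
  rw [le_div_iff₀ hs]
  nlinarith [mul_nonneg ht hr.le]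

lemma div_sub_mul_div_nonneg {x r s L : ℝ} (hr : 0 < r) (hs : 0 < s) (hx : x ≤ L / s) :
    0 ≤ (L - x * s) / r :=
  div_nonneg (sub_nonneg.2 ((le_div_iff₀ hs).1 hx)) hr.le

/-- Each TDMA slot is determined by the NOMA slot `x`, which leaves the sum delay affine in `x`
with slope `-(r1no / r1td + r2no / r2td - 1)`. -/
lemma sumDelay_set_eq_image {r1td r2td r1no r2no L1 L2 : ℝ}
    (hr1td : 0 < r1td) (hr2td : 0 < r2td) (hr1no : 0 < r1no) (hr2no : 0 < r2no) :
    {v : ℝ | ∃ t1 t2 tno : ℝ, 0 ≤ t1 ∧ 0 ≤ t2 ∧ 0 ≤ tno ∧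
        t1 * r1td + tno * r1no = L1 ∧ t2 * r2td + tno * r2no = L2 ∧
        v = t1 + tno + t2} =
      (fun x => L1 / r1td + L2 / r2td - x * (r1no / r1td + r2no / r2td - 1)) ''
        Icc 0 (min (L1 / r1no) (L2 / r2no)) := by
  ext v
  simp only [mem_ofPred_eq, mem_image, mem_Icc, le_min_iff]
  constructor
  · rintro ⟨t1, t2, x, ht1, ht2, hx, e1, e2, rfl⟩
    refine ⟨x, ⟨hx, le_div_of_mul_add_mul_eq_s4 hr1td hr1no ht1 e1,
      le_div_of_mul_add_mul_eq_s4 hr2td hr2no ht2 e2⟩, ?_⟩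
    rw [eq_div_of_mul_add_mul_eq_s4 hr1td e1, eq_div_of_mul_add_mul_eq_s4 hr2td e2]
    field_simp
    ring
  · rintro ⟨x, ⟨hx, hx1, hx2⟩, rfl⟩
    refine ⟨(L1 - x * r1no) / r1td, (L2 - x * r2no) / r2td, x,
      div_sub_mul_div_nonneg hr1td hr1no hx1, div_sub_mul_div_nonneg hr2td hr2no hx2, hx,
      by field_simp; ring, by field_simp; ring, by field_simp; ring⟩

/-- unified closed form (Proposition 1) of the minimum sum
transmission delay. -/
theorem stmt_4 (r1td r2td r1no r2no L1 L2 : ℝ)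
    (hr1td : 0 < r1td) (hr2td : 0 < r2td) (hr1no : 0 < r1no) (hr2no : 0 < r2no)
    (hL1 : 0 < L1) (hL2 : 0 < L2) :
    IsLeast {v : ℝ | ∃ t1 t2 tno : ℝ, 0 ≤ t1 ∧ 0 ≤ t2 ∧ 0 ≤ tno ∧
        t1 * r1td + tno * r1no = L1 ∧ t2 * r2td + tno * r2no = L2 ∧
        v = t1 + tno + t2}
      (L1 / r1td + L2 / r2td -
        max (r1no / r1td + r2no / r2td - 1) 0 *
          min (L1 / r1no) (L2 / r2no)) := by
  rw [sumDelay_set_eq_image hr1td hr2td hr1no hr2no]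
  exact isLeast_image_Icc_sub_mul (by positivity)
end

section
/- Fix positive reals r1td, r2td, L1, L2, r2no with r2no ≤ r2td. Then the function Γ(r1no) := (r1no/r1td + r2no/r2td - 1)·min(L1/r1no, L2/r2no) is monotonically nondecreasing in r1no on (0, ∞). -/
/-- the sum-delay reduction `Γ` is nondecreasing in user 1's NOMA
rate on `(0, ∞)`. -/
theorem stmt_5 (r1td r2td r2no L1 L2 : ℝ)
    (hr1td : 0 < r1td) (hr2td : 0 < r2td) (hr2no : 0 < r2no)
    (hL1 : 0 < L1) (hL2 : 0 < L2) (hle : r2no ≤ r2td) :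
    MonotoneOn
      (fun r1no : ℝ =>
        (r1no / r1td + r2no / r2td - 1) * min (L1 / r1no) (L2 / r2no))
      (Set.Ioi (0 : ℝ)) := by
  intro x hx y hy hxy
  simp only [Set.mem_Ioi] at hx hy
  simp only
  have hc1 : r2no / r2td ≤ 1 := (div_le_one hr2td).mpr hle
  have hK : 0 < L2 / r2no := div_pos hL2 hr2no
  have hLx : 0 < L1 / x := div_pos hL1 hx
  have hLy : 0 < L1 / y := div_pos hL1 hy
  have hLyx : L1 / y ≤ L1 / x := div_le_div_of_nonneg_left hL1.le hx hxy
  have hmx : 0 < min (L1 / x) (L2 / r2no) := lt_min hLx hK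
  have hmy : 0 < min (L1 / y) (L2 / r2no) := lt_min hLy hK
  have hmyx : min (L1 / y) (L2 / r2no) ≤ min (L1 / x) (L2 / r2no) :=
    min_le_min hLyx le_rfl
  have hfxy : x / r1td + r2no / r2td - 1 ≤ y / r1td + r2no / r2td - 1 := by
    have := (div_le_div_iff_of_pos_right hr1td).mpr hxy
    linarith
  rcases le_or_gt (y / r1td + r2no / r2td - 1) 0 with h | h
  · calc (x / r1td + r2no / r2td - 1) * min (L1 / x) (L2 / r2no)
        ≤ (y / r1td + r2no / r2td - 1) * min (L1 / x) (L2 / r2no) :=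
          mul_le_mul_of_nonneg_right hfxy hmx.le
      _ ≤ (y / r1td + r2no / r2td - 1) * min (L1 / y) (L2 / r2no) :=
          mul_le_mul_of_nonpos_left hmyx h
  · rcases le_or_gt (x / r1td + r2no / r2td - 1) 0 with h' | h'
    · have h1 : (x / r1td + r2no / r2td - 1) * min (L1 / x) (L2 / r2no) ≤ 0 :=
        mul_nonpos_of_nonpos_of_nonneg h' hmx.le
      have h2 : 0 ≤ (y / r1td + r2no / r2td - 1) * min (L1 / y) (L2 / r2no) :=
        mul_nonneg h.le hmy.le
      linarith
    · rw [mul_min_of_nonneg _ _ h'.le, mul_min_of_nonneg _ _ h.le]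
      have hg : (x / r1td + r2no / r2td - 1) * (L1 / x)
          ≤ (y / r1td + r2no / r2td - 1) * (L1 / y) := by
        have e1 : x / r1td * (L1 / x) = L1 / r1td := by field_simp
        have e2 : y / r1td * (L1 / y) = L1 / r1td := by field_simp
        have key : (r2no / r2td - 1) * (L1 / x) ≤ (r2no / r2td - 1) * (L1 / y) :=
          mul_le_mul_of_nonpos_left hLyx (by linarith)
        nlinarith [e1, e2, key]
      have hh : (x / r1td + r2no / r2td - 1) * (L2 / r2no)
          ≤ (y / r1td + r2no / r2td - 1) * (L2 / r2no) :=
        mul_le_mul_of_nonneg_right hfxy hK.le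
      exact min_le_min hg hh
end

section
/- Let r1td, r2td, r1no, r2no, L1, L2, tc1 > 0 with tc1 < L2/r2td and λ := r1no/r1td + r2no/r2td - 1 < 0. Then the optimal value of: minimize t1 + t_no + t2 + max(0, tc1 - t2) subject to t1·r1td + t_no·r1no = L1, t2·r2td + t_no·r2no = L2, t1, t2, t_no ≥ 0, equals L1/r1td + L2/r2td, attained at t_no = 0, tk = Lk/rk_td. -/
lemma transmission_time_eq {r1td r2td r1no r2no L1 L2 t1 t2 tno : ℝ}
    (hr1td : r1td ≠ 0) (hr2td : r2td ≠ 0)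
    (h1 : t1 * r1td + tno * r1no = L1) (h2 : t2 * r2td + tno * r2no = L2) :
    t1 + tno + t2 = L1 / r1td + L2 / r2td - nomaPriority r1td r2td r1no r2no * tno := by
  rw [nomaPriority, ← h1, ← h2]
  field_simp
  ring

lemma tdma_time_le_transmission_time {r1td r2td r1no r2no L1 L2 t1 t2 tno : ℝ}
    (hr1td : r1td ≠ 0) (hr2td : r2td ≠ 0) (hlam : nomaPriority r1td r2td r1no r2no ≤ 0)
    (htno : 0 ≤ tno)
    (h1 : t1 * r1td + tno * r1no = L1) (h2 : t2 * r2td + tno * r2no = L2) :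
    L1 / r1td + L2 / r2td ≤ t1 + tno + t2 := by
  rw [transmission_time_eq hr1td hr2td h1 h2]
  nlinarith

theorem stmt_11_general (r1td r2td r1no r2no L1 L2 tc1 : ℝ)
    (hr1td : 0 < r1td) (hr2td : 0 < r2td)
    (hL1 : 0 < L1) (hL2 : 0 < L2)
    (hcase : tc1 < L2 / r2td)
    (hlam : r1no / r1td + r2no / r2td - 1 < 0) :
    IsLeast {v : ℝ | ∃ t1 t2 tno : ℝ, 0 ≤ t1 ∧ 0 ≤ t2 ∧ 0 ≤ tno ∧
        t1 * r1td + tno * r1no = L1 ∧ t2 * r2td + tno * r2no = L2 ∧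
        v = t1 + tno + t2 + max 0 (tc1 - t2)}
      (L1 / r1td + L2 / r2td) ∧
    (L1 / r1td) * r1td + 0 * r1no = L1 ∧
    (L2 / r2td) * r2td + 0 * r2no = L2 ∧
    L1 / r1td + 0 + L2 / r2td + max 0 (tc1 - L2 / r2td) =
      L1 / r1td + L2 / r2td := by
  have hwait : max 0 (tc1 - L2 / r2td) = 0 := max_eq_left (by linarith)
  have hvalue : L1 / r1td + 0 + L2 / r2td + max 0 (tc1 - L2 / r2td) =
      L1 / r1td + L2 / r2td := by
    rw [hwait, add_zero, add_zero]
  have he1 : (L1 / r1td) * r1td + 0 * r1no = L1 := by field_simp; ring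
  have he2 : (L2 / r2td) * r2td + 0 * r2no = L2 := by field_simp; ring
  refine ⟨⟨⟨L1 / r1td, L2 / r2td, 0, by positivity, by positivity, le_rfl, he1, he2,
    hvalue.symm⟩, ?_⟩, he1, he2, hvalue⟩
  rintro v ⟨t1, t2, tno, -, -, htno, h1, h2, rfl⟩
  have htime := tdma_time_le_transmission_time hr1td.ne' hr2td.ne' hlam.le htno h1 h2
  linarith [le_max_left 0 (tc1 - t2)]

/-- finite cloud capacity, case `tc1 < L2/r2td` and negative NOMA
priority — pure TDMA is optimal. -/
theorem stmt_11 (r1td r2td r1no r2no L1 L2 tc1 : ℝ)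
    (hr1td : 0 < r1td) (hr2td : 0 < r2td) (hr1no : 0 < r1no) (hr2no : 0 < r2no)
    (hL1 : 0 < L1) (hL2 : 0 < L2) (htc1 : 0 < tc1)
    (hcase : tc1 < L2 / r2td)
    (hlam : r1no / r1td + r2no / r2td - 1 < 0) :
    IsLeast {v : ℝ | ∃ t1 t2 tno : ℝ, 0 ≤ t1 ∧ 0 ≤ t2 ∧ 0 ≤ tno ∧
        t1 * r1td + tno * r1no = L1 ∧ t2 * r2td + tno * r2no = L2 ∧
        v = t1 + tno + t2 + max 0 (tc1 - t2)}
      (L1 / r1td + L2 / r2td) ∧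
    (L1 / r1td) * r1td + 0 * r1no = L1 ∧
    (L2 / r2td) * r2td + 0 * r2no = L2 ∧
    L1 / r1td + 0 + L2 / r2td + max 0 (tc1 - L2 / r2td) =
      L1 / r1td + L2 / r2td :=
  stmt_11_general r1td r2td r1no r2no L1 L2 tc1 hr1td hr2td hL1 hL2 hcase hlam
end

section
/- Let r1td, r2td, r1no, r2no, L1, L2, tc1 > 0 with tc1 < L2/r2td and λ := r1no/r1td + r2no/r2td - 1 ≥ 0. Set t2* := max((L2 - (L1/r1no)·r2no)/r2td, tc1), t_no* := (L2 - t2*·r2td)/r2no, t1* := (L1 - t_no*·r1no)/r1td. Then (t1*, t2*, t_no*) is an optimal solution of: minimize t1 + t_no + t2 + max(0, tc1 - t2) subject to t1·r1td + t_no·r1no = L1, t2·r2td + t_no·r2no = L2, t1, t2, t_no ≥ 0, provided r1no ≤ r1td and r2no ≤ r2td. -/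
/-!
Eliminating `t1` and `t2` through the two data constraints leaves a one-variable problem in the
NOMA time `tno ∈ [0, L1/r1no]`: the transmission time decreases with slope `λ ≥ 0`, while once
`t2` drops below `tc1` the cloud waiting time grows with slope `r2no/r2td ≥ λ` (as `r1no ≤ r1td`).
Hence the optimum is the kink, i.e. `tno` as large as possible subject to `t2 ≥ tc1`.
-/

theorem neg_mul_add_max_le_of_le_min {lam c a u x : ℝ} (hlam : 0 ≤ lam) (hc : lam ≤ c)
    (hx : x ≤ u) :
    -lam * min u a + max 0 (c * (min u a - a)) ≤ -lam * x + max 0 (c * (x - a)) := by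
  have hkink : max 0 (c * (min u a - a)) = 0 :=
    max_eq_left (mul_nonpos_of_nonneg_of_nonpos (hlam.trans hc) (by simp))
  rw [hkink, add_zero]
  rcases le_or_gt x (min u a) with hle | hlt
  · nlinarith [le_max_left 0 (c * (x - a))]
  · have hau : a ≤ u := by
      by_contra! hua
      rw [min_eq_left hua.le] at hlt
      linarith
    rw [min_eq_right hau] at hlt ⊢
    nlinarith [le_max_right 0 (c * (x - a))]

theorem total_time_eq_of_feasible {r1td r2td r1no r2no L1 L2 tc1 t1 t2 tno : ℝ}
    (hr1td : r1td ≠ 0) (hr2td : r2td ≠ 0) (hr2no : r2no ≠ 0)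
    (hA : t1 * r1td + tno * r1no = L1) (hB : t2 * r2td + tno * r2no = L2) :
    t1 + tno + t2 + max 0 (tc1 - t2) =
      L1 / r1td + L2 / r2td + (-(r1no / r1td + r2no / r2td - 1) * tno +
        max 0 (r2no / r2td * (tno - (L2 - tc1 * r2td) / r2no))) := by
  have hwait : tc1 - t2 = r2no / r2td * (tno - (L2 - tc1 * r2td) / r2no) := by
    subst hB; field_simp; ring
  rw [hwait, ← hA, ← hB]
  field_simp
  ring

theorem stmt_12_general (r1td r2td r1no r2no L1 L2 tc1 : ℝ)
    (hr1td : 0 < r1td) (hr2td : 0 < r2td) (hr1no : 0 < r1no) (hr2no : 0 < r2no)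
    (hL1 : 0 < L1) (htc1 : 0 < tc1)
    (hb1 : r1no ≤ r1td)
    (hcase : tc1 < L2 / r2td)
    (hlam : 0 ≤ r1no / r1td + r2no / r2td - 1) :
    let t2s := max ((L2 - (L1 / r1no) * r2no) / r2td) tc1
    let tnos := (L2 - t2s * r2td) / r2no
    let t1s := (L1 - tnos * r1no) / r1td
    (0 ≤ t1s ∧ 0 ≤ t2s ∧ 0 ≤ tnos ∧
      t1s * r1td + tnos * r1no = L1 ∧ t2s * r2td + tnos * r2no = L2) ∧
    (∀ t1 t2 tno : ℝ, 0 ≤ t1 → 0 ≤ t2 → 0 ≤ tno →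
      t1 * r1td + tno * r1no = L1 → t2 * r2td + tno * r2no = L2 →
      t1s + tnos + t2s + max 0 (tc1 - t2s) ≤
        t1 + tno + t2 + max 0 (tc1 - t2)) := by
  intro t2s tnos t1s
  have htnos : tnos = min (L1 / r1no) ((L2 - tc1 * r2td) / r2no) := by
    have hanti : Antitone fun t => (L2 - t * r2td) / r2no := fun _ _ h => by
      dsimp only; gcongr
    simp only [tnos, t2s, hanti.map_max]
    congr 1
    field_simp
    ring
  have hA : t1s * r1td + tnos * r1no = L1 := by simp only [t1s]; field_simp; ring
  have hB : t2s * r2td + tnos * r2no = L2 := by simp only [tnos]; field_simp; ring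
  have htnos_le : tnos ≤ L1 / r1no := htnos ▸ min_le_left _ _
  have htnos_nonneg : 0 ≤ tnos := by
    rw [htnos]
    refine le_min (by positivity) (div_nonneg ?_ hr2no.le)
    linarith [(lt_div_iff₀ hr2td).mp hcase]
  have hslope : r1no / r1td + r2no / r2td - 1 ≤ r2no / r2td := by
    linarith [(div_le_one hr1td).mpr hb1]
  refine ⟨⟨?_, htc1.le.trans (le_max_right _ _), htnos_nonneg, hA, hB⟩, ?_⟩
  · exact div_nonneg (by linarith [(le_div_iff₀ hr1no).mp htnos_le]) hr1td.le
  intro t1 t2 tno ht1 _ _ hA' hB'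
  have htno_le : tno ≤ L1 / r1no := by
    rw [le_div_iff₀ hr1no]; linarith [mul_nonneg ht1 hr1td.le]
  rw [total_time_eq_of_feasible hr1td.ne' hr2td.ne' hr2no.ne' hA hB,
    total_time_eq_of_feasible hr1td.ne' hr2td.ne' hr2no.ne' hA' hB', htnos]
  exact add_le_add_right (neg_mul_add_max_le_of_le_min hlam hslope htno_le) _

/-- finite cloud capacity, case `tc1 < L2/r2td` and nonnegative
NOMA priority — the stated point is an optimal solution. -/
theorem stmt_12 (r1td r2td r1no r2no L1 L2 tc1 : ℝ)
    (hr1td : 0 < r1td) (hr2td : 0 < r2td) (hr1no : 0 < r1no) (hr2no : 0 < r2no)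
    (hL1 : 0 < L1) (hL2 : 0 < L2) (htc1 : 0 < tc1)
    (hb1 : r1no ≤ r1td) (hb2 : r2no ≤ r2td)
    (hcase : tc1 < L2 / r2td)
    (hlam : 0 ≤ r1no / r1td + r2no / r2td - 1) :
    let t2s := max ((L2 - (L1 / r1no) * r2no) / r2td) tc1
    let tnos := (L2 - t2s * r2td) / r2no
    let t1s := (L1 - tnos * r1no) / r1td
    (0 ≤ t1s ∧ 0 ≤ t2s ∧ 0 ≤ tnos ∧
      t1s * r1td + tnos * r1no = L1 ∧ t2s * r2td + tnos * r2no = L2) ∧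
    (∀ t1 t2 tno : ℝ, 0 ≤ t1 → 0 ≤ t2 → 0 ≤ tno →
      t1 * r1td + tno * r1no = L1 → t2 * r2td + tno * r2no = L2 →
      t1s + tnos + t2s + max 0 (tc1 - t2s) ≤
        t1 + tno + t2 + max 0 (tc1 - t2)) :=
  stmt_12_general r1td r2td r1no r2no L1 L2 tc1 hr1td hr2td hr1no hr2no hL1 htc1 hb1 hcase hlam
end

section
/- Let r1td, r2td, r1no, r2no, L1, L2, tc1 > 0. For any feasible point (t1, t2, t_no) of t1·r1td + t_no·r1no = L1, t2·r2td + t_no·r2no = L2, t1, t2, t_no ≥ 0, the objective with waiting time satisfies t1 + t_no + t2 + max(0, tc1 - t2) ≥ max(L1/r1td + tc1, L1/r1td + L2/r2td - max(λ,0)·min(L1/r1no, L2/r2no)), where λ := r1no/r1td + r2no/r2td - 1, provided r1no ≤ r1td and r2no ≤ r2td. -/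
/-- lower bound on the sum delay with finite cloud capacity. -/
theorem stmt_13 (r1td r2td r1no r2no L1 L2 tc1 : ℝ)
    (hr1td : 0 < r1td) (hr2td : 0 < r2td) (hr1no : 0 < r1no) (hr2no : 0 < r2no)
    (hL1 : 0 < L1) (hL2 : 0 < L2) (htc1 : 0 < tc1)
    (hb1 : r1no ≤ r1td) (hb2 : r2no ≤ r2td)
    (t1 t2 tno : ℝ) (ht1 : 0 ≤ t1) (ht2 : 0 ≤ t2) (htno : 0 ≤ tno)
    (hc1 : t1 * r1td + tno * r1no = L1)
    (hc2 : t2 * r2td + tno * r2no = L2) :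
    max (L1 / r1td + tc1)
        (L1 / r1td + L2 / r2td -
          max (r1no / r1td + r2no / r2td - 1) 0 *
            min (L1 / r1no) (L2 / r2no)) ≤
      t1 + tno + t2 + max 0 (tc1 - t2) := by
  have hw : tc1 ≤ t2 + max 0 (tc1 - t2) := by
    have := le_max_right 0 (tc1 - t2); linarith
  have hw0 : (0:ℝ) ≤ max 0 (tc1 - t2) := le_max_left _ _
  have h1 : L1 / r1td ≤ t1 + tno := by
    rw [div_le_iff₀ hr1td]
    nlinarith [mul_nonneg htno (sub_nonneg.2 hb1)]
  have htno1 : tno ≤ L1 / r1no := by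
    rw [le_div_iff₀ hr1no]
    nlinarith [mul_nonneg ht1 hr1td.le]
  have htno2 : tno ≤ L2 / r2no := by
    rw [le_div_iff₀ hr2no]
    nlinarith [mul_nonneg ht2 hr2td.le]
  have hmin : tno ≤ min (L1 / r1no) (L2 / r2no) := le_min htno1 htno2
  have hminpos : 0 ≤ min (L1 / r1no) (L2 / r2no) := le_trans htno hmin
  have ht1e : t1 = L1 / r1td - tno * (r1no / r1td) := by
    field_simp; linarith
  have ht2e : t2 = L2 / r2td - tno * (r2no / r2td) := by
    field_simp; linarith
  set lam := r1no / r1td + r2no / r2td - 1 with hlam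
  have key : tno * lam ≤ max lam 0 * min (L1 / r1no) (L2 / r2no) := by
    rcases le_or_gt lam 0 with h | h
    · have h1' : tno * lam ≤ 0 := mul_nonpos_of_nonneg_of_nonpos htno h
      exact h1'.trans (mul_nonneg (le_max_right _ _) hminpos)
    · rw [max_eq_left h.le]
      calc tno * lam ≤ min (L1 / r1no) (L2 / r2no) * lam :=
            mul_le_mul_of_nonneg_right hmin h.le
        _ = lam * min (L1 / r1no) (L2 / r2no) := mul_comm _ _
  have hT : t1 + tno + t2 = L1 / r1td + L2 / r2td - tno * lam := by
    rw [ht1e, ht2e, hlam]; ring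
  apply max_le
  · linarith
  · linarith
end

section
/- Let r1td, r2td, L1, L2, F, C1 > 0. If C1·L1/F ≥ L2/r2td, then for every r1no, r2no with 0 < r1no ≤ r1td, 0 < r2no ≤ r2td, the optimal sum delay of the finite-capacity problem equals L1/r1td + C1·L1/F + C2·L2/F (with user 2's computing time C2·L2/F added), independent of the NOMA rates; i.e., pure TDMA is optimal whenever C1 ≥ L2·F/(L1·r2td). -/
/-- if `C1 ≥ L2·F/(L1·r2td)` (i.e. `tc1 ≥ L2/r2td`), pure TDMA is
delay-optimal and the optimal sum delay is `L1/r1td + C1·L1/F + C2·L2/F`,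
independent of the NOMA rates. -/
theorem stmt_17 (r1td r2td L1 L2 F C1 C2 : ℝ)
    (hr1td : 0 < r1td) (hr2td : 0 < r2td)
    (hL1 : 0 < L1) (hL2 : 0 < L2) (hF : 0 < F) (hC1 : 0 < C1) (hC2 : 0 < C2)
    (hthr : L2 * F / (L1 * r2td) ≤ C1) :
    ∀ r1no r2no : ℝ, 0 < r1no → r1no ≤ r1td → 0 < r2no → r2no ≤ r2td →
      IsLeast {v : ℝ | ∃ t1 t2 tno : ℝ, 0 ≤ t1 ∧ 0 ≤ t2 ∧ 0 ≤ tno ∧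
          t1 * r1td + tno * r1no = L1 ∧ t2 * r2td + tno * r2no = L2 ∧
          v = t1 + tno + t2 + max 0 (C1 * L1 / F - t2) + C2 * L2 / F}
        (L1 / r1td + C1 * L1 / F + C2 * L2 / F) := by
  intro r1no r2no hr1no hle1 hr2no hle2
  have htc : L2 / r2td ≤ C1 * L1 / F := by
    rw [div_le_div_iff₀ hr2td hF]
    have := (div_le_iff₀ (by positivity : (0:ℝ) < L1 * r2td)).mp hthr
    nlinarith
  constructor
  · refine ⟨L1 / r1td, L2 / r2td, 0, by positivity, by positivity, le_refl 0, ?_, ?_, ?_⟩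
    · field_simp; ring
    · field_simp; ring
    · have : max 0 (C1 * L1 / F - L2 / r2td) = C1 * L1 / F - L2 / r2td :=
        max_eq_right (by linarith)
      rw [this]; ring
  · rintro v ⟨t1, t2, tno, ht1, ht2, htno, hc1, hc2, rfl⟩
    have h1 : L1 / r1td ≤ t1 + tno := by
      rw [div_le_iff₀ hr1td]
      nlinarith
    have h2 : C1 * L1 / F - t2 ≤ max 0 (C1 * L1 / F - t2) := le_max_right _ _
    linarith
end
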